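/- Let A be an n×n complex matrix, d ≥ 2 an integer, and suppose the polynomial map f(x) = x + (Ax)^d (d-th power applied entrywise) has Jacobian determinant identically 1. Then (Aᵀ)^{⊙(d−1)} · diag(A) = 0, where ⊙ denotes the Hadamard power and diag(A) is the vector of diagonal entries; equivalently, for every j = 1,…,n, ∑_{k=1}^n a_{kj}^{d−1} a_{kk} = 0. -/

import Mathlib

open Matrix BigOperators

/-- Jacobian determinant of a map `f : ℂ^ι → ℂ^ι` at `x`. -/
noncomputable def jacDet {ι : Type*} [Fintype ι] [DecidableEq ι]
    (f : (ι → ℂ) → (ι → ℂ)) (x : ι → ℂ) : ℂ :=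
  (LinearMap.toMatrix (Pi.basisFun ℂ ι) (Pi.basisFun ℂ ι)
    (fderiv ℂ f x).toLinearMap).det

/-- The map `x ↦ x + φ(Ax)`, with `φ` applied entrywise. -/
noncomputable def phiMap {ι : Type*} [Fintype ι] (A : Matrix ι ι ℂ) (φ : ℂ → ℂ)
    (x : ι → ℂ) : ι → ℂ :=
  fun j => x j + φ (A.mulVec x j)

/-- Domain of definition of `x ↦ x + φ(Ax)` for `φ` defined on `Ω`. -/
def phiDom {ι : Type*} [Fintype ι] (A : Matrix ι ι ℂ) (Ω : Set ℂ) : Set (ι → ℂ) :=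
  {x | ∀ j, A.mulVec x j ∈ Ω}

/-- `(A, φ)` is a good pair: the Jacobian of `x + φ(Ax)` is identically a nonzero constant. -/
def IsGoodPair {ι : Type*} [Fintype ι] [DecidableEq ι]
    (A : Matrix ι ι ℂ) (Ω : Set ℂ) (φ : ℂ → ℂ) : Prop :=
  ∃ c : ℂ, c ≠ 0 ∧ ∀ x ∈ phiDom A Ω, jacDet (phiMap A φ) x = c

/-- A matrix is universal if it forms a good pair with every analytic function. -/
def IsUniversal {ι : Type*} [Fintype ι] [DecidableEq ι] (A : Matrix ι ι ℂ) : Prop :=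
  ∀ (Ω : Set ℂ) (φ : ℂ → ℂ), IsOpen Ω → Ω.Nonempty → IsPreconnected Ω →
    AnalyticOn ℂ φ Ω → (phiDom A Ω).Nonempty → IsGoodPair A Ω φ

/-- The principal minor of `A` indexed by `I`. -/
noncomputable def principalMinor {ι : Type*} [DecidableEq ι] (A : Matrix ι ι ℂ)
    (I : Finset ι) : ℂ :=
  (A.submatrix (fun i : I => (i : ι)) (fun i : I => (i : ι))).det

/-!
The Jacobian matrix of `x ↦ x + (Ax)^d` is `1 + d · diag((Ax)^(d-1)) A`. On the line
`x = t e_j` it equals `1 + d t^(d-1) B_j` with `B_j = diag(a_{·j}^(d-1)) A`, and `d t^(d-1)`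
takes every complex value. So `det (1 + s B_j) = 1` for all `s`; the coefficient of `s` in
this polynomial is `tr B_j = ∑_k a_{kj}^(d-1) a_{kk}`.
-/

open Polynomial in
theorem Matrix.trace_eq_zero_of_det_one_add_smul_eq_one {R ι : Type*} [CommRing R] [IsDomain R]
    [Infinite R] [Fintype ι] [DecidableEq ι] {B : Matrix ι ι R}
    (h : ∀ s : R, (1 + s • B).det = 1) : B.trace = 0 := by
  have hpoly : det (1 + (X : R[X]) • B.map C) = 1 :=
    Polynomial.funext fun s => by simpa [eval_det, ← smul_eq_mul_diagonal] using h s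
  rw [← coeff_det_one_add_X_smul_one, hpoly, coeff_one]
  rfl

theorem Matrix.trace_diagonal_mul {R ι : Type*} [CommRing R] [Fintype ι] [DecidableEq ι]
    (v : ι → R) (A : Matrix ι ι R) : (diagonal v * A).trace = ∑ k, v k * A k k := by
  simp [trace, diagonal_mul]

theorem hasFDerivAt_phiMap {ι : Type*} [Fintype ι] [DecidableEq ι] (A : Matrix ι ι ℂ)
    {φ φ' : ℂ → ℂ} {x : ι → ℂ}
    (hφ : ∀ k, HasDerivAt φ (φ' ((A *ᵥ x) k)) ((A *ᵥ x) k)) :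
    HasFDerivAt (phiMap A φ) (LinearMap.toContinuousLinearMap
      (1 + diagonal (fun k => φ' ((A *ᵥ x) k)) * A).mulVecLin) x := by
  rw [hasFDerivAt_pi']
  intro j
  have hlin : HasFDerivAt (fun y => (A *ᵥ y) j)
      ((ContinuousLinearMap.proj j).comp (LinearMap.toContinuousLinearMap A.mulVecLin)) x :=
    ((ContinuousLinearMap.proj j).comp (LinearMap.toContinuousLinearMap A.mulVecLin)).hasFDerivAt
  refine (((ContinuousLinearMap.proj j).hasFDerivAt (x := x)).add
    ((hφ j).comp_hasFDerivAt x hlin)).congr_fderiv ?_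
  ext v
  simp [-mulVec_mulVec, mulVec_diagonal]

theorem jacDet_eq_det_of_hasFDerivAt {ι : Type*} [Fintype ι] [DecidableEq ι]
    {f : (ι → ℂ) → (ι → ℂ)} {M : Matrix ι ι ℂ} {x : ι → ℂ}
    (hf : HasFDerivAt f (LinearMap.toContinuousLinearMap M.mulVecLin) x) :
    jacDet f x = M.det := by
  rw [jacDet, hf.fderiv, LinearMap.toMatrix_eq_toMatrix']
  exact congrArg det (LinearMap.toMatrix'_toLin' M)

theorem jacDet_add_pow_mulVec {ι : Type*} [Fintype ι] [DecidableEq ι] (A : Matrix ι ι ℂ)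
    (d : ℕ) (x : ι → ℂ) :
    jacDet (fun y j => y j + (A *ᵥ y) j ^ d) x =
      (1 + diagonal (fun k => d * (A *ᵥ x) k ^ (d - 1)) * A).det :=
  jacDet_eq_det_of_hasFDerivAt <| hasFDerivAt_phiMap A (φ := (· ^ d))
    (φ' := fun z => d * z ^ (d - 1)) (x := x) fun _ => hasDerivAt_pow d _

theorem stmt14 (n : ℕ) (A : Matrix (Fin n) (Fin n) ℂ) (d : ℕ) (hd : 2 ≤ d)
    (hjac : ∀ x : Fin n → ℂ, jacDet (fun y j => y j + (A.mulVec y j) ^ d) x = 1) :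
    ∀ j, ∑ k, A k j ^ (d - 1) * A k k = 0 := by
  intro j
  set B := diagonal (fun k => A k j ^ (d - 1)) * A
  suffices ∀ s : ℂ, (1 + s • B).det = 1 by
    simpa [B, trace_diagonal_mul] using trace_eq_zero_of_det_one_add_smul_eq_one this
  intro s
  obtain ⟨t, ht⟩ := IsAlgClosed.exists_pow_nat_eq (s / d) (by omega : 0 < d - 1)
  have hd0 : (d : ℂ) ≠ 0 := Nat.cast_ne_zero.mpr (by omega)
  have hdiag : diagonal (fun k => d * (A *ᵥ t • Pi.single j 1) k ^ (d - 1)) * A = s • B := by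
    ext k l
    simp [B, diagonal_mul, mulVec_smul, mul_pow, ht]
    field_simp
  rw [← hdiag, ← jacDet_add_pow_mulVec]
  exact hjac _
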